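/- arXiv:2411.06623 — 5 statements merged into one kernel-verified Lean document; each statement's English description precedes it below -/
import Mathlib

section
/- If a solution v of the Dalcher–Kalnay ODE has initial condition v₀ with 0 < v₀ < v∞ and α − s/v∞ − 2(α/v∞)v₀ ≤ 0, then v is strictly concave on (0, ∞), i.e., d²v/dt² < 0 for all t > 0. -/
/-!
Along a solution of an autonomous equation `v' = f(v)` the chain rule gives `v'' = f'(v) f(v)`.
For the Dalcher–Kalnay field `f(x) = (αx + s)(1 - x/v∞)` the factor `f(v)` is positive on
`(0, v∞)`, while `f'(x) = α - s/v∞ - 2(α/v∞)x` is strictly decreasing, so it is negative at every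
`x > v₀` once it is nonpositive at `v₀`.
-/

open Filter Topology

theorem deriv_deriv_of_autonomous {f v : ℝ → ℝ} {t f' : ℝ}
    (hv : ∀ᶠ u in 𝓝 t, HasDerivAt v (f (v u)) u) (hf : HasDerivAt f f' (v t)) :
    deriv (deriv v) t = f' * f (v t) := by
  have hderiv : deriv v =ᶠ[𝓝 t] f ∘ v := hv.mono fun _ hu => hu.deriv
  rw [hderiv.deriv_eq]
  exact (hf.comp t hv.self_of_nhds).deriv

noncomputable def dalcherKalnayField (α s vinf : ℝ) (x : ℝ) : ℝ := (α * x + s) * (1 - x / vinf)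

namespace dalcherKalnayField

theorem hasDerivAt (α s vinf x : ℝ) :
    HasDerivAt (dalcherKalnayField α s vinf) (α - s / vinf - 2 * (α / vinf) * x) x := by
  have hlin : HasDerivAt (fun y => α * y + s) α x := by
    simpa using ((hasDerivAt_id x).const_mul α).add_const s
  have hdecay : HasDerivAt (fun y => 1 - y / vinf) (-(1 / vinf)) x := by
    simpa using ((hasDerivAt_id x).div_const vinf).const_sub 1
  exact (hlin.mul hdecay).congr_deriv (by ring)

variable {α s vinf x : ℝ}

theorem pos (hα : 0 ≤ α) (hs : 0 < s) (hx : 0 ≤ x) (hxvinf : x < vinf) :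
    0 < dalcherKalnayField α s vinf x := by
  have hvinf : 0 < vinf := hx.trans_lt hxvinf
  have hdecay : 0 < 1 - x / vinf := by rwa [sub_pos, div_lt_one hvinf]
  exact mul_pos (by positivity) hdecay

theorem slope_neg_of_slope_nonpos {x₀ : ℝ} (hα : 0 < α) (hvinf : 0 < vinf)
    (hx₀ : α - s / vinf - 2 * (α / vinf) * x₀ ≤ 0) (hx : x₀ < x) :
    α - s / vinf - 2 * (α / vinf) * x < 0 := by
  have hstep : 2 * (α / vinf) * x₀ < 2 * (α / vinf) * x := by gcongr
  linarith

end dalcherKalnayField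

theorem dk_concave_general (α s vinf v₀ : ℝ)
    (hα : 0 < α) (hs : 0 < s) (hvinf : 0 < vinf)
    (v : ℝ → ℝ)
    (hode : ∀ t, 0 ≤ t → HasDerivAt v ((α * v t + s) * (1 - v t / vinf)) t)
    (h0pos : 0 < v₀)
    (hrange : ∀ t, 0 < t → v₀ < v t ∧ v t < vinf)
    (hcrit : α - s / vinf - 2 * (α / vinf) * v₀ ≤ 0) :
    ∀ t, 0 < t → deriv (deriv v) t < 0 := by
  intro t ht
  obtain ⟨hv₀, hvinf'⟩ := hrange t ht
  have hsol : ∀ᶠ u in 𝓝 t, HasDerivAt v (dalcherKalnayField α s vinf (v u)) u := by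
    filter_upwards [Ioi_mem_nhds ht] with u hu using hode u (le_of_lt hu)
  rw [deriv_deriv_of_autonomous hsol (dalcherKalnayField.hasDerivAt α s vinf (v t))]
  exact mul_neg_of_neg_of_pos
    (dalcherKalnayField.slope_neg_of_slope_nonpos hα hvinf hcrit hv₀)
    (dalcherKalnayField.pos hα.le hs (h0pos.trans hv₀).le hvinf')

/-- If the Dalcher–Kalnay solution has 0 < v₀ < v∞ and
α − s/v∞ − 2(α/v∞)v₀ ≤ 0, it is strictly concave on (0, ∞): d²v/dt² < 0 for t > 0. -/
theorem dk_concave (α s vinf v₀ : ℝ)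
    (hα : 0 < α) (hs : 0 < s) (hvinf : 0 < vinf)
    (v : ℝ → ℝ) (hC2 : ContDiff ℝ 2 v)
    (hode : ∀ t, 0 ≤ t → HasDerivAt v ((α * v t + s) * (1 - v t / vinf)) t)
    (h0 : v 0 = v₀) (h0pos : 0 < v₀) (h0lt : v₀ < vinf)
    (hrange : ∀ t, 0 < t → v₀ < v t ∧ v t < vinf)
    (hcrit : α - s / vinf - 2 * (α / vinf) * v₀ ≤ 0) :
    ∀ t, 0 < t → deriv (deriv v) t < 0 :=
  dk_concave_general α s vinf v₀ hα hs hvinf v hode h0pos hrange hcrit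
end

section
/- If v₀ ∈ (0, v∞) satisfies α − s/v∞ − 2(α/v∞)v₀ > 0, then there exists t_c > 0 such that the solution v of the Dalcher–Kalnay ODE is strictly convex on (0, t_c) and strictly concave on (t_c, ∞). -/
/-!
The right-hand side `F v = (α v + s)(1 - v / v∞)` is a downward parabola in `v` with vertex
`v_c = v∞ / 2 - s / (2 α)`; the hypothesis on `v₀` says `v₀ < v_c`, and `v_c < v∞` as `s > 0`.
Since `v` increases from `v₀` to `v∞`, it crosses `v_c` at a single time `t_c > 0`. Before `t_c` the
velocity `v' = F ∘ v` is a strictly increasing function composed with an increasing one, after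
`t_c` a strictly decreasing one composed with an increasing one; so `v` is strictly convex,
resp. strictly concave, there.
-/

open Set Filter Topology

section Autonomous

variable {f g : ℝ → ℝ} {D S : Set ℝ}

theorem strictConvexOn_of_hasDerivAt_comp (hD : Convex ℝ D)
    (hf : ∀ t ∈ D, HasDerivAt f (g (f t)) t) (hf_mono : StrictMonoOn f D)
    (hg : StrictMonoOn g S) (hfS : MapsTo f D S) : StrictConvexOn ℝ D f := by
  refine StrictMonoOn.strictConvexOn_of_deriv hD
    (fun t ht => (hf t ht).continuousAt.continuousWithinAt) ?_
  have hderiv : EqOn (deriv f) (g ∘ f) D := fun t ht => (hf t ht).deriv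
  exact ((hg.comp hf_mono hfS).congr hderiv.symm).mono interior_subset

theorem strictConcaveOn_of_hasDerivAt_comp (hD : Convex ℝ D)
    (hf : ∀ t ∈ D, HasDerivAt f (g (f t)) t) (hf_mono : StrictMonoOn f D)
    (hg : StrictAntiOn g S) (hfS : MapsTo f D S) : StrictConcaveOn ℝ D f := by
  refine StrictAntiOn.strictConcaveOn_of_deriv hD
    (fun t ht => (hf t ht).continuousAt.continuousWithinAt) ?_
  have hderiv : EqOn (deriv f) (g ∘ f) D := fun t ht => (hf t ht).deriv
  exact ((hg.comp_strictMonoOn hf_mono hfS).congr hderiv.symm).mono interior_subset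

end Autonomous

theorem exists_gt_eq_of_tendsto_atTop {f : ℝ → ℝ} {a c L : ℝ} (hf : ContinuousOn f (Ici a))
    (hac : f a < c) (hcL : c < L) (hlim : Tendsto f atTop (𝓝 L)) : ∃ t, a < t ∧ f t = c := by
  obtain ⟨T, hTa, hcT⟩ :=
    ((eventually_ge_atTop a).and (hlim.eventually (eventually_gt_nhds hcL))).exists
  obtain ⟨t, ht, rfl⟩ := intermediate_value_Icc hTa (hf.mono Icc_subset_Ici_self)
    ⟨hac.le, hcT.le⟩
  exact ⟨t, ht.1.lt_of_ne (by rintro rfl; exact hac.false), rfl⟩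

namespace DalcherKalnay

variable (α s vinf : ℝ)

noncomputable def field (v : ℝ) : ℝ := (α * v + s) * (1 - v / vinf)

noncomputable def vertex : ℝ := vinf / 2 - s / (2 * α)

variable {α s vinf}

theorem field_sub_field (hα : α ≠ 0) (hvinf : vinf ≠ 0) (x y : ℝ) :
    field α s vinf y - field α s vinf x = α / vinf * (y - x) * (2 * vertex α s vinf - x - y) := by
  unfold field vertex
  field_simp
  ring

theorem strictMonoOn_field (hα : 0 < α) (hvinf : 0 < vinf) :
    StrictMonoOn (field α s vinf) (Iic (vertex α s vinf)) := by
  intro x hx y hy hxy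
  have hsub := field_sub_field (s := s) hα.ne' hvinf.ne' x y
  have hpos : 0 < α / vinf * (y - x) * (2 * vertex α s vinf - x - y) :=
    mul_pos (mul_pos (div_pos hα hvinf) (sub_pos.2 hxy))
      (by linarith [mem_Iic.1 hx, mem_Iic.1 hy])
  linarith

theorem strictAntiOn_field (hα : 0 < α) (hvinf : 0 < vinf) :
    StrictAntiOn (field α s vinf) (Ici (vertex α s vinf)) := by
  intro x hx y hy hxy
  have hsub := field_sub_field (s := s) hα.ne' hvinf.ne' x y
  have hneg : α / vinf * (y - x) * (2 * vertex α s vinf - x - y) < 0 :=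
    mul_neg_of_pos_of_neg (mul_pos (div_pos hα hvinf) (sub_pos.2 hxy))
      (by linarith [mem_Ici.1 hx, mem_Ici.1 hy])
  linarith

theorem lt_vertex (hα : 0 < α) (hvinf : 0 < vinf) {v₀ : ℝ}
    (hcrit : 0 < α - s / vinf - 2 * (α / vinf) * v₀) : v₀ < vertex α s vinf := by
  have key : α - s / vinf - 2 * (α / vinf) * v₀ = 2 * (α / vinf) * (vertex α s vinf - v₀) := by
    unfold vertex
    field_simp
  rw [key] at hcrit
  exact sub_pos.1 (pos_of_mul_pos_right hcrit (by positivity))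

theorem vertex_lt (hα : 0 < α) (hs : 0 < s) (hvinf : 0 < vinf) : vertex α s vinf < vinf := by
  unfold vertex
  linarith [div_pos hs (mul_pos two_pos hα)]

end DalcherKalnay

open DalcherKalnay in
theorem dk_inflection_general (α s vinf v₀ : ℝ)
    (hα : 0 < α) (hs : 0 < s) (hvinf : 0 < vinf)
    (v : ℝ → ℝ)
    (hode : ∀ t, 0 ≤ t → HasDerivAt v ((α * v t + s) * (1 - v t / vinf)) t)
    (h0 : v 0 = v₀)
    (hmono : StrictMonoOn v (Set.Ici 0))
    (hlim : Filter.Tendsto v Filter.atTop (nhds vinf))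
    (hcrit : 0 < α - s / vinf - 2 * (α / vinf) * v₀) :
    ∃ tc : ℝ, 0 < tc ∧ StrictConvexOn ℝ (Set.Ioo 0 tc) v ∧
      StrictConcaveOn ℝ (Set.Ioi tc) v := by
  have hode' : ∀ t ∈ Ici (0 : ℝ), HasDerivAt v (field α s vinf (v t)) t := hode
  obtain ⟨tc, htc, hvtc⟩ := exists_gt_eq_of_tendsto_atTop
    (fun t ht => (hode' t ht).continuousAt.continuousWithinAt)
    (h0 ▸ lt_vertex hα hvinf hcrit) (vertex_lt hα hs hvinf) hlim
  have hIoo : Ioo 0 tc ⊆ Ici 0 := Ioo_subset_Ioi_self.trans Ioi_subset_Ici_self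
  have hIoi : Ioi tc ⊆ Ici 0 := (Ioi_subset_Ioi htc.le).trans Ioi_subset_Ici_self
  refine ⟨tc, htc, ?_, ?_⟩
  · refine strictConvexOn_of_hasDerivAt_comp (convex_Ioo 0 tc) (fun t ht => hode' t (hIoo ht))
      (hmono.mono hIoo) (strictMonoOn_field hα hvinf) fun t ht => ?_
    exact hvtc ▸ (hmono (hIoo ht) (mem_Ici.2 htc.le) ht.2).le
  · refine strictConcaveOn_of_hasDerivAt_comp (convex_Ioi tc) (fun t ht => hode' t (hIoi ht))
      (hmono.mono hIoi) (strictAntiOn_field hα hvinf) fun t ht => ?_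
    exact hvtc ▸ (hmono (mem_Ici.2 htc.le) (hIoi ht) ht).le

/-- If 0 < v₀ < v∞ and α − s/v∞ − 2(α/v∞)v₀ > 0, there exists an inflection
time t_c > 0 such that the Dalcher–Kalnay solution is strictly convex on
(0, t_c) and strictly concave on (t_c, ∞). -/
theorem dk_inflection (α s vinf v₀ : ℝ)
    (hα : 0 < α) (hs : 0 < s) (hvinf : 0 < vinf)
    (v : ℝ → ℝ) (hC2 : ContDiff ℝ 2 v)
    (hode : ∀ t, 0 ≤ t → HasDerivAt v ((α * v t + s) * (1 - v t / vinf)) t)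
    (h0 : v 0 = v₀) (h0pos : 0 < v₀) (h0lt : v₀ < vinf)
    (hmono : StrictMonoOn v (Set.Ici 0))
    (hlim : Filter.Tendsto v Filter.atTop (nhds vinf))
    (hcrit : 0 < α - s / vinf - 2 * (α / vinf) * v₀) :
    ∃ tc : ℝ, 0 < tc ∧ StrictConvexOn ℝ (Set.Ioo 0 tc) v ∧
      StrictConcaveOn ℝ (Set.Ioi tc) v :=
  dk_inflection_general α s vinf v₀ hα hs hvinf v hode h0 hmono hlim hcrit
end

section
/- Any solution of the SDE dv* = (v* + 1)(1 − v*/v*∞) dt + β v* dW with initial value v*(0) > 0 exists globally and remains strictly positive for all t ≥ 0, almost surely. -/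
/-!
Multiplying by the integrating factor `e t = exp (-(β W t - β² t / 2))` turns the equation into
the random ODE `Y' = e t * b (Y / e t)` for `Y = X * e`, where `b x = (x + 1) (1 - x / v∞)`.
Wherever `Y = 0` this field equals `e t > 0`, so `Y`, hence `X`, can never reach `0`. On a bounded
time interval the field is negative wherever `Y > v∞ * max e`, so solutions are trapped in a
bounded interval on which the field is uniformly Lipschitz. Picard–Lindelöf for the field clamped to
that interval gives a solution on every `[0, T]`; by uniqueness these agree and glue to a global
solution.
-/

open Set Topology Metric
open scoped NNReal

section Comparison

variable {Y Y' : ℝ → ℝ} {a b c : ℝ}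

theorem le_image_of_deriv_pos_at_boundary (hY : ∀ t ∈ Icc a b, HasDerivAt Y (Y' t) t)
    (ha : c ≤ Y a) (hc : ∀ t ∈ Ico a b, Y t = c → 0 < Y' t) : ∀ t ∈ Icc a b, c ≤ Y t :=
  image_le_of_deriv_right_lt_deriv_boundary' continuousOn_const
    (fun _ _ => hasDerivWithinAt_const _ _ c) ha
    (fun t ht => (hY t ht).continuousAt.continuousWithinAt)
    (fun t ht => (hY t (Ico_subset_Icc_self ht)).hasDerivWithinAt)
    (fun t ht h => hc t ht h.symm)

theorem image_le_of_deriv_neg_at_boundary (hY : ∀ t ∈ Icc a b, HasDerivAt Y (Y' t) t)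
    (ha : Y a ≤ c) (hc : ∀ t ∈ Ico a b, Y t = c → Y' t < 0) : ∀ t ∈ Icc a b, Y t ≤ c :=
  image_le_of_deriv_right_lt_deriv_boundary'
    (fun t ht => (hY t ht).continuousAt.continuousWithinAt)
    (fun t ht => (hY t (Ico_subset_Icc_self ht)).hasDerivWithinAt) ha continuousOn_const
    (fun _ _ => hasDerivWithinAt_const _ _ c) hc

theorem lt_image_of_deriv_pos_at_boundary (hY : ∀ t, a ≤ t → HasDerivAt Y (Y' t) t)
    (ha : c < Y a) (hc : ∀ t, a ≤ t → Y t = c → 0 < Y' t) : ∀ t, a ≤ t → c < Y t := by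
  intro t ht
  have hle : ∀ s ∈ Icc a (t + 1), c ≤ Y s :=
    le_image_of_deriv_pos_at_boundary (fun s hs => hY s hs.1) ha.le (fun s hs => hc s hs.1)
  refine (hle t ⟨ht, by linarith⟩).lt_of_ne fun hYt => ?_
  have hat : a < t := ht.lt_of_ne (by rintro rfl; exact ha.ne hYt)
  have hmin : IsLocalMin Y t := by
    filter_upwards [Ioo_mem_nhds hat (lt_add_one t)] with s hs
    exact hYt ▸ hle s (Ioo_subset_Icc_self hs)
  exact (hc t ht hYt.symm).ne' (hmin.hasDerivAt_eq_zero (hY t ht))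

end Comparison

section ODE

variable {E : Type*} [NormedAddCommGroup E] [NormedSpace ℝ E] {v : ℝ → E → E}

theorem ODE_solution_unique_of_mem_Icc_of_lipschitzOnWith_closedBall {a b : ℝ} {f g : ℝ → E}
    (hv : ∀ R, ∃ K, ∀ t ∈ Icc a b, LipschitzOnWith K (v t) (closedBall 0 R))
    (hf : ∀ t ∈ Icc a b, HasDerivAt f (v t (f t)) t)
    (hg : ∀ t ∈ Icc a b, HasDerivAt g (v t (g t)) t) (ha : f a = g a) :
    EqOn f g (Icc a b) := by
  have hfc : ContinuousOn f (Icc a b) := fun t ht => (hf t ht).continuousAt.continuousWithinAt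
  have hgc : ContinuousOn g (Icc a b) := fun t ht => (hg t ht).continuousAt.continuousWithinAt
  obtain ⟨Rf, hRf⟩ := isCompact_Icc.exists_bound_of_continuousOn hfc
  obtain ⟨Rg, hRg⟩ := isCompact_Icc.exists_bound_of_continuousOn hgc
  obtain ⟨K, hK⟩ := hv (max Rf Rg)
  have mem_ball {h : ℝ → E} {R : ℝ} (hR : ∀ t ∈ Icc a b, ‖h t‖ ≤ R) (hle : R ≤ max Rf Rg) :
      ∀ t ∈ Ico a b, h t ∈ closedBall 0 (max Rf Rg) := fun t ht =>
    mem_closedBall_zero_iff.2 ((hR t (Ico_subset_Icc_self ht)).trans hle)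
  exact ODE_solution_unique_of_mem_Icc_right (fun t ht => hK t (Ico_subset_Icc_self ht))
    hfc (fun t ht => (hf t (Ico_subset_Icc_self ht)).hasDerivWithinAt)
    (mem_ball hRf (le_max_left _ _)) hgc
    (fun t ht => (hg t (Ico_subset_Icc_self ht)).hasDerivWithinAt)
    (mem_ball hRg (le_max_right _ _)) ha

theorem exists_forall_hasDerivAt_of_forall_Icc {y₀ : E}
    (hex : ∀ T, ∃ Y : ℝ → E, Y 0 = y₀ ∧ ∀ t ∈ Icc 0 T, HasDerivAt Y (v t (Y t)) t)
    (huniq : ∀ T (Y₁ Y₂ : ℝ → E), (∀ t ∈ Icc 0 T, HasDerivAt Y₁ (v t (Y₁ t)) t) →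
      (∀ t ∈ Icc 0 T, HasDerivAt Y₂ (v t (Y₂ t)) t) → Y₁ 0 = Y₂ 0 → EqOn Y₁ Y₂ (Icc 0 T)) :
    ∃ Y : ℝ → E, Y 0 = y₀ ∧ ∀ t, 0 ≤ t → HasDerivAt Y (v t (Y t)) t := by
  choose Y hY0 hY using hex
  have hcompat : ∀ {S T}, S ≤ T → EqOn (Y S) (Y T) (Icc 0 S) := fun hST =>
    huniq _ _ _ (hY _) (fun t ht => hY _ t ⟨ht.1, ht.2.trans hST⟩) ((hY0 _).trans (hY0 _).symm)
  let Yg : ℝ → E := fun s => Y (⌊s⌋₊ + 1) s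
  have hloc : ∀ t, 0 ≤ t → Yg =ᶠ[𝓝 t] Y (⌊t⌋₊ + 1) := by
    intro t ht
    rcases lt_or_ge t 1 with ht1 | ht1
    · filter_upwards [Iio_mem_nhds ht1] with s hs
      simp [Yg, Nat.floor_eq_zero.2 (mem_Iio.1 hs), Nat.floor_eq_zero.2 ht1]
    · filter_upwards [Ioo_mem_nhds (by linarith : (0 : ℝ) < t) (Nat.lt_floor_add_one t)]
        with s hs
      refine hcompat ?_ ⟨hs.1.le, (Nat.lt_floor_add_one s).le⟩
      have : ⌊s⌋₊ < ⌊t⌋₊ + 1 := (Nat.floor_lt hs.1.le).2 (mod_cast hs.2)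
      exact_mod_cast this
  refine ⟨Yg, by simpa [Yg] using hY0 1, fun t ht => ?_⟩
  have hd := hY _ t ⟨ht, (Nat.lt_floor_add_one t).le⟩
  rwa [← (hloc t ht).eq_of_nhds, ← (hloc t ht).hasDerivAt_iff] at hd

end ODE

theorem exists_lipschitzOnWith_of_contDiffOn_prod {F E G : Type*} [NormedAddCommGroup F]
    [NormedSpace ℝ F] [NormedAddCommGroup E] [NormedSpace ℝ E] [NormedAddCommGroup G]
    [NormedSpace ℝ G] {Φ : F × E → G} {P : Set F} {S : Set E}
    (hΦ : ContDiffOn ℝ 1 Φ (P ×ˢ S)) (hP : Convex ℝ P) (hP' : IsCompact P) (hS : Convex ℝ S)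
    (hS' : IsCompact S) : ∃ K, ∀ p ∈ P, LipschitzOnWith K (fun y => Φ (p, y)) S := by
  obtain ⟨K, hK⟩ := hΦ.exists_lipschitzOnWith one_ne_zero (hP.prod hS) (hP'.prod hS')
  refine ⟨K, fun p hp => ?_⟩
  have := hK.comp (LipschitzWith.prodMk_left p).lipschitzOnWith fun y hy => ⟨hp, hy⟩
  rwa [mul_one] at this

/-- Picard–Lindelöf for the field clamped to `[m, M]`; the sign conditions on the boundary of
`[m, M]` keep the solution inside, where the clamp does nothing. -/
theorem exists_hasDerivAt_of_inward_on_boundary_Icc {v : ℝ → ℝ → ℝ} {a b t₀ m M y₀ : ℝ} {K : ℝ≥0}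
    (hat₀ : a < t₀) (ht₀b : t₀ ≤ b)
    (hcont : ∀ y ∈ Icc m M, ContinuousOn (fun t => v t y) (Icc a b))
    (hlip : ∀ t ∈ Icc a b, LipschitzOnWith K (v t) (Icc m M))
    (hm : ∀ t ∈ Icc t₀ b, 0 < v t m) (hM : ∀ t ∈ Icc t₀ b, v t M < 0) (hy₀ : y₀ ∈ Icc m M) :
    ∃ Y : ℝ → ℝ, Y t₀ = y₀ ∧ ∀ t ∈ Ico t₀ b, HasDerivAt Y (v t (Y t)) t := by
  have hmM : m ≤ M := hy₀.1.trans hy₀.2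
  let w : ℝ → ℝ → ℝ := fun t y => v t (projIcc m M hmM y)
  have hw : ∀ t y, y ∈ Icc m M → w t y = v t y := fun t y hy => by simp [w, projIcc_of_mem hmM hy]
  have hwlip : ∀ t ∈ Icc a b, LipschitzWith K (w t) := fun t ht =>
    LipschitzWith.of_dist_le_mul fun y z => ((hlip t ht).dist_le_mul _ (projIcc m M hmM y).2 _
      (projIcc m M hmM z).2).trans
        (by
          gcongr
          rw [← Subtype.dist_eq]
          simpa using (LipschitzWith.projIcc hmM).dist_le_mul y z)
  obtain ⟨C, hC⟩ := isCompact_Icc.exists_bound_of_continuousOn (hcont m ⟨le_rfl, hmM⟩)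
  set L := C + K * (M - m)
  have hbound : ∀ t ∈ Icc a b, ∀ y, ‖w t y‖ ≤ L := fun t ht y => by
    have hp : (projIcc m M hmM y : ℝ) ∈ Icc m M := (projIcc m M hmM y).2
    set p : ℝ := (projIcc m M hmM y : ℝ)
    have hpm : dist p m ≤ M - m := by
      rw [Real.dist_eq, abs_of_nonneg (by linarith [hp.1])]
      linarith [hp.2]
    calc ‖v t p‖ ≤ ‖v t m‖ + dist (v t p) (v t m) := by
          rw [dist_eq_norm]; exact norm_le_insert' _ _
      _ ≤ L := add_le_add (hC t ht)
          (((hlip t ht).dist_le_mul p hp m ⟨le_rfl, hmM⟩).trans (by gcongr))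
  have hL : 0 ≤ L := (norm_nonneg _).trans (hbound a ⟨le_rfl, hat₀.le.trans ht₀b⟩ y₀)
  have hPL : IsPicardLindelof w (tmin := a) (tmax := b) ⟨t₀, hat₀.le, ht₀b⟩ y₀
      ⟨L * (b - a), mul_nonneg hL (by linarith)⟩ 0 ⟨L, hL⟩ K :=
    { lipschitzOnWith := fun t ht => (hwlip t ht).lipschitzOnWith
      continuousOn := fun y _ => hcont _ (projIcc m M hmM y).2
      norm_le := fun t ht y _ => hbound t ht y
      mul_max_le := by
        simp only [NNReal.coe_zero, sub_zero]
        exact mul_le_mul_of_nonneg_left (max_le (by linarith) (by linarith)) hL }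
  obtain ⟨Y, hY₀, hY⟩ := hPL.exists_eq_forall_mem_Icc_hasDerivWithinAt₀
  have hYd : ∀ t ∈ Ioo a b, HasDerivAt Y (w t (Y t)) t := fun t ht =>
    (hY t (Ioo_subset_Icc_self ht)).hasDerivAt (Icc_mem_nhds ht.1 ht.2)
  have hYmem : ∀ t ∈ Ico t₀ b, Y t ∈ Icc m M := fun t ht => by
    have hsub : Icc t₀ t ⊆ Ioo a b := Icc_subset_Ioo hat₀ ht.2
    have hd : ∀ s ∈ Icc t₀ t, HasDerivAt Y (w s (Y s)) s := fun s hs => hYd s (hsub hs)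
    have hs : ∀ s ∈ Ico t₀ t, s ∈ Icc t₀ b := fun s hs => ⟨hs.1, hs.2.le.trans ht.2.le⟩
    refine ⟨le_image_of_deriv_pos_at_boundary hd (hY₀ ▸ hy₀.1) ?_ t ⟨ht.1, le_rfl⟩,
      image_le_of_deriv_neg_at_boundary hd (hY₀ ▸ hy₀.2) ?_ t ⟨ht.1, le_rfl⟩⟩
    · intro s hs' hYs
      rw [hYs, hw s m ⟨le_rfl, hmM⟩]
      exact hm s (hs s hs')
    · intro s hs' hYs
      rw [hYs, hw s M ⟨hmM, le_rfl⟩]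
      exact hM s (hs s hs')
  refine ⟨Y, hY₀, fun t ht => ?_⟩
  rw [← hw t _ (hYmem t ht)]
  exact hYd t ⟨hat₀.trans_le ht.1, ht.2⟩

namespace ErrorGrowthSDE

noncomputable def drift (vinf x : ℝ) : ℝ := (x + 1) * (1 - x / vinf)

/-- If `Y = X * e`, the equation `Y' = e t * drift vinf (X t)` reads
`Y' = transformedField vinf e t Y`. -/
noncomputable def transformedField (vinf : ℝ) (e : ℝ → ℝ) (t y : ℝ) : ℝ :=
  e t * drift vinf (y / e t)

variable {vinf : ℝ} {e : ℝ → ℝ}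

@[simp]
theorem transformedField_zero (t : ℝ) : transformedField vinf e t 0 = e t := by
  simp [transformedField, drift]

theorem drift_neg (hv : 0 < vinf) {x : ℝ} (hx : vinf < x) : drift vinf x < 0 :=
  mul_neg_of_pos_of_neg (by linarith) (by rw [sub_neg, one_lt_div hv]; exact hx)

theorem transformedField_neg (hv : 0 < vinf) {t y : ℝ} (he : 0 < e t) (hy : e t * vinf < y) :
    transformedField vinf e t y < 0 :=
  mul_neg_of_pos_of_neg he (drift_neg hv (by rwa [lt_div_iff₀' he]))

theorem continuous_transformedField (he : Continuous e) (hpos : ∀ t, 0 < e t) (y : ℝ) :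
    Continuous fun t => transformedField vinf e t y := by
  have : ∀ t, e t ≠ 0 := fun t => (hpos t).ne'
  unfold transformedField drift
  fun_prop (disch := assumption)

theorem exists_lipschitzOnWith_transformedField (he : Continuous e) (hpos : ∀ t, 0 < e t)
    (a b : ℝ) {S : Set ℝ} (hS : Convex ℝ S) (hS' : IsCompact S) :
    ∃ K, ∀ t ∈ Icc a b, LipschitzOnWith K (transformedField vinf e t) S := by
  have hΦ : ContDiffOn ℝ 1 (fun q : ℝ × ℝ => q.1 * drift vinf (q.2 / q.1))
      ((e '' Icc a b) ×ˢ S) := by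
    have : ∀ q ∈ (e '' Icc a b) ×ˢ S, q.1 ≠ 0 := by
      rintro q ⟨⟨t, -, ht⟩, -⟩
      exact ht ▸ (hpos t).ne'
    unfold drift
    fun_prop (disch := assumption)
  obtain ⟨K, hK⟩ := exists_lipschitzOnWith_of_contDiffOn_prod hΦ
    (isPreconnected_Icc.image e he.continuousOn).convex (isCompact_Icc.image he) hS hS'
  exact ⟨K, fun t ht => hK (e t) (mem_image_of_mem e ht)⟩

theorem exists_hasDerivAt_transformedField (hv : 0 < vinf) (he : Continuous e)
    (hpos : ∀ t, 0 < e t) {y₀ : ℝ} (hy₀ : 0 ≤ y₀) (T : ℝ) :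
    ∃ Y : ℝ → ℝ, Y 0 = y₀ ∧ ∀ t ∈ Icc 0 T, HasDerivAt Y (transformedField vinf e t (Y t)) t := by
  set b := |T| + 1
  obtain ⟨e₁, he₁⟩ := ((isCompact_Icc (a := 0) (b := b)).image he).bddAbove
  set M := max y₀ (e₁ * vinf) + 1
  obtain ⟨K, hK⟩ := exists_lipschitzOnWith_transformedField (vinf := vinf) he hpos (-1) b
    (convex_Icc 0 M) isCompact_Icc
  obtain ⟨Y, hY₀, hY⟩ := exists_hasDerivAt_of_inward_on_boundary_Icc neg_one_lt_zero
    (by positivity) (fun y _ => (continuous_transformedField he hpos y).continuousOn) hK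
    (fun t _ => by simpa using hpos t)
    (fun t ht => transformedField_neg hv (hpos t) (by
      have := mul_le_mul_of_nonneg_right (he₁ (mem_image_of_mem e ht)) hv.le
      linarith [le_max_right y₀ (e₁ * vinf)]))
    ⟨hy₀, by linarith [le_max_left y₀ (e₁ * vinf)]⟩
  exact ⟨Y, hY₀, fun t ht => hY t ⟨ht.1, ht.2.trans_lt (by linarith [le_abs_self T])⟩⟩

end ErrorGrowthSDE

open ErrorGrowthSDE

/-- Global existence and positivity for the nonlinear error-growth SDE
dv* = (v* + 1)(1 − v*/v*∞)dt + βv* dW with v*(0) > 0, in the pathwise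
(Doss–Sussmann) representation: with Z(t) = βW(t) − β²t/2, a process X solves
the SDE iff Y = X·exp(−Z) solves the random ODE Y'(t) = exp(−Z(t))·b(X(t)) where
b(v) = (v + 1)(1 − v/v*∞). There exists a global such solution with X(0) = x₀ > 0,
and every such solution remains strictly positive for all t ≥ 0. -/
theorem nonlinear_sde_global_positive (vinf β x₀ : ℝ)
    (hvinf : 0 < vinf) (hx₀ : 0 < x₀)
    (W : ℝ → ℝ) (hW : Continuous W) (hW0 : W 0 = 0) :
    (∃ X : ℝ → ℝ, X 0 = x₀ ∧
      (∀ t, 0 ≤ t →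
        HasDerivAt (fun u => X u * Real.exp (-(β * W u - β ^ 2 * u / 2)))
          (Real.exp (-(β * W t - β ^ 2 * t / 2)) *
            ((X t + 1) * (1 - X t / vinf))) t) ∧
      (∀ t, 0 ≤ t → 0 < X t)) ∧
    (∀ X : ℝ → ℝ, X 0 = x₀ →
      (∀ t, 0 ≤ t →
        HasDerivAt (fun u => X u * Real.exp (-(β * W u - β ^ 2 * u / 2)))
          (Real.exp (-(β * W t - β ^ 2 * t / 2)) *
            ((X t + 1) * (1 - X t / vinf))) t) →
      ∀ t, 0 ≤ t → 0 < X t) := by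
  set e : ℝ → ℝ := fun t => Real.exp (-(β * W t - β ^ 2 * t / 2))
  have he : Continuous e := by fun_prop
  have hpos : ∀ t, 0 < e t := fun t => Real.exp_pos _
  have he₀ : e 0 = 1 := by simp [e, hW0]
  have hfield : ∀ (X : ℝ → ℝ) t,
      e t * ((X t + 1) * (1 - X t / vinf)) = transformedField vinf e t (X t * e t) :=
    fun X t => by rw [transformedField, mul_div_cancel_right₀ _ (hpos t).ne', drift]
  have positive : ∀ X : ℝ → ℝ, X 0 = x₀ →
      (∀ t, 0 ≤ t → HasDerivAt (fun u => X u * e u) (e t * ((X t + 1) * (1 - X t / vinf))) t) →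
      ∀ t, 0 ≤ t → 0 < X t := by
    intro X hX₀ hX t ht
    have hY := lt_image_of_deriv_pos_at_boundary (c := 0)
      (fun t ht => hfield X t ▸ hX t ht) (by simpa [hX₀, he₀] using hx₀)
      (fun t _ h => by simpa [h] using hpos t) t ht
    exact pos_of_mul_pos_left hY (hpos t).le
  obtain ⟨Y, hY₀, hY⟩ := exists_forall_hasDerivAt_of_forall_Icc
    (exists_hasDerivAt_transformedField hvinf he hpos hx₀.le)
    fun T _ _ => ODE_solution_unique_of_mem_Icc_of_lipschitzOnWith_closedBall fun R =>
      exists_lipschitzOnWith_transformedField he hpos 0 T (convex_closedBall 0 R)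
        (isCompact_closedBall 0 R)
  have hX : ∀ t, 0 ≤ t → HasDerivAt (fun u => Y u / e u * e u)
      (e t * ((Y t / e t + 1) * (1 - Y t / e t / vinf))) t := fun t ht => by
    rw [funext fun u => div_mul_cancel₀ (Y u) (hpos u).ne']
    exact hY t ht
  exact ⟨⟨fun t => Y t / e t, by simp [hY₀, he₀], hX, positive _ (by simp [hY₀, he₀]) hX⟩,
    positive⟩
end

section
/- The function ρ∞(v) = D·exp(−2((β²v∞ − v∞ + 1)·log v + v∞/v + v)/(β²v∞)) on (0, ∞), with β, v∞ > 0, solves the stationary Fokker–Planck equation −(v + 1)(1 − v/v∞)ρ + d/dv[(β²v²/2)ρ] = 0 for any constant D. -/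
/-!
Writing `ρ∞ = D exp (κ ψ)` with `κ = -2/(β² v∞)` and `ψ(v) = c log v + v∞/v + v`, the product rule gives
`d/dv[a ρ∞] = (a' + κ a ψ') ρ∞` for the diffusion coefficient `a(v) = β²v²/2`, and the choice of `c = β²v∞ - v∞ + 1`
makes `a' + κ a ψ'` equal to the drift `(v + 1)(1 - v/v∞)`.
-/

open Real

theorem hasDerivAt_mul_const_mul_exp_const_mul {a ψ : ℝ → ℝ} {a' ψ' κ D v : ℝ}
    (ha : HasDerivAt a a' v) (hψ : HasDerivAt ψ ψ' v) :
    HasDerivAt (fun u => a u * (D * exp (κ * ψ u)))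
      ((a' + κ * a v * ψ') * (D * exp (κ * ψ v))) v := by
  refine (ha.mul ((hψ.const_mul κ).exp.const_mul D)).congr_deriv ?_
  ring

theorem hasDerivAt_const_mul_log_add_div_add_id {c b v : ℝ} (hv : v ≠ 0) :
    HasDerivAt (fun u => c * log u + b / u + u) (c / v - b / v ^ 2 + 1) v := by
  have hlog := (hasDerivAt_log hv).const_mul c
  have hdiv := (hasDerivAt_inv hv).const_mul b
  refine ((hlog.add hdiv).add (hasDerivAt_id v)).congr_of_eventuallyEq ?_ |>.congr_deriv ?_
  · filter_upwards with u
    simp [div_eq_mul_inv]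
  · ring

theorem hasDerivAt_const_mul_sq_div_two (β v : ℝ) :
    HasDerivAt (fun u => β ^ 2 * u ^ 2 / 2) (β ^ 2 * v) v := by
  refine (((hasDerivAt_pow 2 v).const_mul (β ^ 2)).div_const 2).congr_deriv ?_
  ring

theorem stationary_drift_identity {β vinf v : ℝ} (hβ : β ≠ 0) (hvinf : vinf ≠ 0) (hv : v ≠ 0) :
    β ^ 2 * v + -(2 / (β ^ 2 * vinf)) * (β ^ 2 * v ^ 2 / 2) *
        ((β ^ 2 * vinf - vinf + 1) / v - vinf / v ^ 2 + 1) =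
      (v + 1) * (1 - v / vinf) := by
  field_simp
  ring

/-- The function ρ∞(v) = D·exp(−2((β²v∞ − v∞ + 1)log v + v∞/v + v)/(β²v∞))
solves the stationary (zero-flux) Fokker–Planck equation
−(v + 1)(1 − v/v∞)ρ + d/dv[(β²v²/2)ρ] = 0 on (0, ∞). -/
theorem stationary_fokker_planck (β vinf D : ℝ) (hβ : 0 < β) (hvinf : 0 < vinf) :
    ∀ v : ℝ, 0 < v →
      HasDerivAt
        (fun u : ℝ => β ^ 2 * u ^ 2 / 2 *
          (D * Real.exp (-(2 / (β ^ 2 * vinf)) *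
            ((β ^ 2 * vinf - vinf + 1) * Real.log u + vinf / u + u))))
        ((v + 1) * (1 - v / vinf) *
          (D * Real.exp (-(2 / (β ^ 2 * vinf)) *
            ((β ^ 2 * vinf - vinf + 1) * Real.log v + vinf / v + v)))) v := by
  intro v hv
  have h := hasDerivAt_mul_const_mul_exp_const_mul (κ := -(2 / (β ^ 2 * vinf))) (D := D)
    (hasDerivAt_const_mul_sq_div_two β v)
    (hasDerivAt_const_mul_log_add_div_add_id (c := β ^ 2 * vinf - vinf + 1) (b := vinf) hv.ne')
  rwa [stationary_drift_identity hβ.ne' hvinf.ne' hv.ne'] at h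
end

section
/- The function ρ∞(v) = D·exp(−2((β²v∞ − v∞ + 1)·log v + v∞/v + v)/(β²v∞)) with D > 0 is integrable on (0, ∞) and is unimodal with unique maximizer v* = ½(−β²v∞ + √((β²v∞ − v∞ + 1)² + 4v∞) + v∞ − 1). -/
/-!
Write the density as `D * exp (-c * Φ v)` with `c = 2 / (β² v∞)` and the potential
`Φ v = a log v + v∞ / v + v`, `a = β² v∞ - v∞ + 1`.
Since `v² Φ'(v) = v² + a v - v∞` and `v∞ > 0`, the derivative of the density changes sign
exactly once on `(0, ∞)`, at the positive root `v*` of this quadratic.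
For integrability, `|log v| ≤ 2 (√v + 1/√v)` lets the terms `v∞ / v` and `v` absorb the
logarithm, so `Φ v ≥ v / 2 - K` and the density is dominated by a multiple of `exp (-c v / 2)`.
-/

open Real MeasureTheory Set

noncomputable section

def potential (a w v : ℝ) : ℝ := a * log v + w / v + v

def density (D c a w v : ℝ) : ℝ := D * exp (-c * potential a w v)

def criticalPoint (a w : ℝ) : ℝ := (√(a ^ 2 + 4 * w) - a) / 2

end

theorem abs_log_le_two_mul_sqrt_add_inv {v : ℝ} (hv : 0 < v) :
    |log v| ≤ 2 * (√v + (√v)⁻¹) := by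
  have hs : 0 < √v := sqrt_pos.2 hv
  have hlog : log v = 2 * log √v := by rw [log_sqrt hv.le]; ring
  have hupper : log √v ≤ √v := (log_le_sub_one_of_pos hs).trans (by linarith)
  have hlower : -log √v ≤ (√v)⁻¹ := by
    rw [← log_inv]; exact (log_le_sub_one_of_pos (inv_pos.2 hs)).trans (by linarith)
  rw [hlog, abs_le]
  constructor <;> nlinarith [inv_pos.2 hs]

theorem exists_half_sub_le_potential (a : ℝ) {w : ℝ} (hw : 0 < w) :
    ∃ K, ∀ v, 0 < v → v / 2 - K ≤ potential a w v := by
  refine ⟨|a| ^ 2 / w + 2 * |a| ^ 2, fun v hv => ?_⟩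
  set s := √v
  have hs : 0 < s := sqrt_pos.2 hv
  have hs2 : s ^ 2 = v := sq_sqrt hv.le
  have hlog : -(2 * |a| * (s + s⁻¹)) ≤ a * log v := by
    have := mul_le_mul_of_nonneg_left (abs_log_le_two_mul_sqrt_add_inv hv) (abs_nonneg a)
    rw [← abs_mul] at this
    linarith [neg_abs_le (a * log v)]
  -- complete the squares `w (1/s - |a|/w)²` and `(s - 2|a|)² / 2`
  have hinv : -(|a| ^ 2 / w) ≤ w / v - 2 * |a| * s⁻¹ := by
    have hsq : 0 ≤ w * (s⁻¹ - |a| / w) ^ 2 := by positivity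
    have hexpand : w * (s⁻¹ - |a| / w) ^ 2 = w / v - 2 * |a| * s⁻¹ + |a| ^ 2 / w := by
      rw [← hs2]; field_simp; ring
    linarith
  have hlin : -(2 * |a| ^ 2) ≤ v / 2 - 2 * |a| * s := by
    nlinarith [sq_nonneg (s - 2 * |a|)]
  unfold potential
  linarith

theorem integrableOn_density_Ioi (D : ℝ) {c : ℝ} (hc : 0 < c) (a : ℝ) {w : ℝ} (hw : 0 < w) :
    IntegrableOn (density D c a w) (Ioi 0) := by
  obtain ⟨K, hK⟩ := exists_half_sub_le_potential a hw
  have hdom : IntegrableOn (fun v => |D| * exp (c * K) * exp (-(c / 2) * v)) (Ioi 0) :=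
    (exp_neg_integrableOn_Ioi 0 (by positivity)).const_mul _
  refine hdom.mono' ?_ ?_
  · refine (measurable_const.mul (Measurable.exp ?_)).aestronglyMeasurable
    unfold potential
    fun_prop
  · filter_upwards [ae_restrict_mem measurableSet_Ioi] with v hv
    have hexp : -c * potential a w v ≤ c * K + -(c / 2) * v := by
      linarith [mul_le_mul_of_nonneg_left (hK v hv) hc.le]
    calc ‖density D c a w v‖ = |D| * exp (-c * potential a w v) := by
          rw [density, norm_mul, norm_eq_abs, norm_eq_abs, abs_exp]
      _ ≤ |D| * exp (c * K + -(c / 2) * v) := by gcongr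
      _ = |D| * exp (c * K) * exp (-(c / 2) * v) := by rw [exp_add]; ring

theorem hasDerivAt_potential (a w : ℝ) {v : ℝ} (hv : 0 < v) :
    HasDerivAt (potential a w) ((v ^ 2 + a * v - w) / v ^ 2) v := by
  have h : HasDerivAt (fun u => a * log u + w * u⁻¹ + u) (a * v⁻¹ + w * -(v ^ 2)⁻¹ + 1) v :=
    (((hasDerivAt_log hv.ne').const_mul a).add ((hasDerivAt_inv hv.ne').const_mul w)).add
      (hasDerivAt_id v)
  convert h using 1
  · funext u; simp only [potential, div_eq_mul_inv]
  · field_simp; ring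

theorem deriv_density (D c a w : ℝ) {v : ℝ} (hv : 0 < v) :
    deriv (density D c a w) v =
      D * exp (-c * potential a w v) * (-c * ((v ^ 2 + a * v - w) / v ^ 2)) :=
  ((((hasDerivAt_potential a w hv).const_mul (-c)).exp).const_mul D).deriv.trans
    (mul_assoc _ _ _).symm

theorem abs_le_sqrt_sq_add_four_mul (a : ℝ) {w : ℝ} (hw : 0 ≤ w) : |a| ≤ √(a ^ 2 + 4 * w) := by
  rw [← sqrt_sq_eq_abs]; exact sqrt_le_sqrt (by linarith)

theorem criticalPoint_nonneg (a : ℝ) {w : ℝ} (hw : 0 ≤ w) : 0 ≤ criticalPoint a w := by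
  have := (le_abs_self a).trans (abs_le_sqrt_sq_add_four_mul a hw)
  unfold criticalPoint; linarith

theorem sq_add_mul_sub_eq_mul (a : ℝ) {w : ℝ} (hw : 0 ≤ w) (v : ℝ) :
    v ^ 2 + a * v - w = (v - criticalPoint a w) * (v + criticalPoint a w + a) := by
  have hs := sq_sqrt (show 0 ≤ a ^ 2 + 4 * w by positivity)
  unfold criticalPoint; linear_combination hs / 4

theorem criticalPoint_add_nonneg (a : ℝ) {w : ℝ} (hw : 0 ≤ w) : 0 ≤ criticalPoint a w + a := by
  have := (neg_le_abs a).trans (abs_le_sqrt_sq_add_four_mul a hw)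
  unfold criticalPoint; linarith

theorem sq_add_mul_sub_neg_of_lt_criticalPoint {a w v : ℝ} (hw : 0 ≤ w) (hv : 0 < v)
    (h : v < criticalPoint a w) : v ^ 2 + a * v - w < 0 := by
  rw [sq_add_mul_sub_eq_mul a hw]
  exact mul_neg_of_neg_of_pos (by linarith) (by linarith [criticalPoint_add_nonneg a hw])

theorem sq_add_mul_sub_pos_of_criticalPoint_lt {a w v : ℝ} (hw : 0 ≤ w)
    (h : criticalPoint a w < v) : 0 < v ^ 2 + a * v - w := by
  rw [sq_add_mul_sub_eq_mul a hw]
  exact mul_pos (by linarith)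
    (by linarith [criticalPoint_nonneg a hw, criticalPoint_add_nonneg a hw])

theorem deriv_density_pos {D c a w v : ℝ} (hD : 0 < D) (hc : 0 < c) (hw : 0 ≤ w) (hv : 0 < v)
    (h : v < criticalPoint a w) : 0 < deriv (density D c a w) v := by
  rw [deriv_density D c a w hv]
  have hq := sq_add_mul_sub_neg_of_lt_criticalPoint hw hv h
  have : 0 < -c * ((v ^ 2 + a * v - w) / v ^ 2) :=
    mul_pos_of_neg_of_neg (neg_neg_of_pos hc) (div_neg_of_neg_of_pos hq (by positivity))
  positivity

theorem deriv_density_neg {D c a w v : ℝ} (hD : 0 < D) (hc : 0 < c) (hw : 0 ≤ w)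
    (h : criticalPoint a w < v) : deriv (density D c a w) v < 0 := by
  have hv : 0 < v := (criticalPoint_nonneg a hw).trans_lt h
  rw [deriv_density D c a w hv]
  have hq := sq_add_mul_sub_pos_of_criticalPoint_lt hw h
  have : -c * ((v ^ 2 + a * v - w) / v ^ 2) < 0 :=
    mul_neg_of_neg_of_pos (neg_neg_of_pos hc) (by positivity)
  exact mul_neg_of_pos_of_neg (by positivity) this

/-- The stationary density ρ∞(v) = D·exp(−2((β²v∞ − v∞ + 1)log v + v∞/v + v)/(β²v∞))
with D > 0 is integrable on (0, ∞) and unimodal, with unique maximizer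
v* = ½(−β²v∞ + √((β²v∞ − v∞ + 1)² + 4v∞) + v∞ − 1). -/
theorem stationary_density_unimodal (β vinf D : ℝ)
    (hβ : 0 < β) (hvinf : 0 < vinf) (hD : 0 < D) :
    MeasureTheory.IntegrableOn
      (fun v : ℝ => D * Real.exp (-(2 / (β ^ 2 * vinf)) *
        ((β ^ 2 * vinf - vinf + 1) * Real.log v + vinf / v + v)))
      (Set.Ioi 0) ∧
    (∀ v : ℝ, 0 < v →
      v < (-(β ^ 2 * vinf) + Real.sqrt ((β ^ 2 * vinf - vinf + 1) ^ 2 + 4 * vinf)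
            + vinf - 1) / 2 →
      0 < deriv (fun u : ℝ => D * Real.exp (-(2 / (β ^ 2 * vinf)) *
        ((β ^ 2 * vinf - vinf + 1) * Real.log u + vinf / u + u))) v) ∧
    (∀ v : ℝ,
      (-(β ^ 2 * vinf) + Real.sqrt ((β ^ 2 * vinf - vinf + 1) ^ 2 + 4 * vinf)
            + vinf - 1) / 2 < v →
      deriv (fun u : ℝ => D * Real.exp (-(2 / (β ^ 2 * vinf)) *
        ((β ^ 2 * vinf - vinf + 1) * Real.log u + vinf / u + u))) v < 0) := by
  have hc : 0 < 2 / (β ^ 2 * vinf) := by positivity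
  have hv_star : (-(β ^ 2 * vinf) + √((β ^ 2 * vinf - vinf + 1) ^ 2 + 4 * vinf) + vinf - 1) / 2
      = criticalPoint (β ^ 2 * vinf - vinf + 1) vinf := by
    unfold criticalPoint; ring
  rw [hv_star]
  exact ⟨integrableOn_density_Ioi D hc _ hvinf,
    fun v hv h => deriv_density_pos hD hc hvinf.le hv h,
    fun v h => deriv_density_neg hD hc hvinf.le h⟩
end
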